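/- arXiv:1109.4430 — 2 statements merged into one kernel-verified Lean document; each statement's English description precedes it below -/
import Mathlib

section
/- Let A be a p × n integer matrix and suppose its Smith normal form S = U A V (with U ∈ GL(p, ℤ) and V ∈ GL(n, ℤ) unimodular and S diagonal) has nonzero diagonal entries s₁, …, s_r (so A has rank r). Then the topological group G = { m ∈ ℝⁿ : A m ∈ ℤᵖ } / ℤⁿ is isomorphic, as a topological group, to (ℝ/ℤ)^{n−r} × ℤ/s₁ℤ × ⋯ × ℤ/s_rℤ. -/
/-- The integer lattice ℤⁿ as an additive subgroup of ℝⁿ. -/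
def intLattice (n : ℕ) : AddSubgroup (Fin n → ℝ) where
  carrier := {v | ∀ i, ∃ k : ℤ, v i = (k : ℝ)}
  zero_mem' := fun _ => ⟨0, by simp⟩
  add_mem' := by
    intro a b ha hb i
    obtain ⟨k, hk⟩ := ha i
    obtain ⟨l, hl⟩ := hb i
    exact ⟨k + l, by simp [hk, hl]⟩
  neg_mem' := by
    intro a ha i
    obtain ⟨k, hk⟩ := ha i
    exact ⟨-k, by simp [hk]⟩

/-- The torus ℝⁿ/ℤⁿ. -/
abbrev Torus (n : ℕ) : Type := (Fin n → ℝ) ⧸ intLattice n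

/-- The subgroup { m ∈ ℝⁿ : A m ∈ ℤᵖ } of ℝⁿ, for an integer p × n matrix A. -/
def preG (p n : ℕ) (A : Matrix (Fin p) (Fin n) ℤ) : AddSubgroup (Fin n → ℝ) :=
  (intLattice p).comap (Matrix.mulVecLin (A.map (fun x : ℤ => (x : ℝ)))).toAddMonoidHom

/-- G = { m ∈ ℝⁿ : A m ∈ ℤᵖ } / ℤⁿ as a subgroup of the torus ℝⁿ/ℤⁿ. -/
def G (p n : ℕ) (A : Matrix (Fin p) (Fin n) ℤ) : AddSubgroup (Torus n) :=
  (preG p n A).map (QuotientAddGroup.mk' (intLattice n))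

/-- ZMod k carries the discrete topology. -/
instance (k : ℕ) : TopologicalSpace (ZMod k) := ⊥
instance (k : ℕ) : DiscreteTopology (ZMod k) := ⟨rfl⟩

/-! Multiplication by `V` identifies `{m : A m ∈ ℤᵖ}` with `V • {z : S z ∈ ℤᵖ}`, and for the
diagonal `S` the latter set is `s₁⁻¹ℤ × ⋯ × s_r⁻¹ℤ × ℝ^{n-r}`. Hence `(u, m) ↦ V (m₁/s₁, …, m_r/s_r, u)`
maps `ℝ^{n-r} × ℤ^r` continuously onto `G`, with the same kernel `ℤ^{n-r} × ∏ sₖℤ` as the quotient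
map onto `(ℝ/ℤ)^{n-r} × ∏ ℤ/sₖℤ`. The induced bijection from this compact group onto the Hausdorff
group `G` is continuous, hence a homeomorphism. -/

open Matrix QuotientAddGroup Topology

noncomputable def ContinuousAddEquiv.ofKerEq {X Y Z : Type*} [AddGroup X] [AddGroup Y] [AddGroup Z]
    [TopologicalSpace X] [TopologicalSpace Y] [TopologicalSpace Z] [CompactSpace Y] [T2Space Z]
    (f : X →+ Y) (g : X →+ Z) (hf : IsQuotientMap f) (hg : Continuous g)
    (hgs : Function.Surjective g) (hker : f.ker = g.ker) : Y ≃ₜ+ Z :=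
  let e : Y ≃+ Z := (quotientKerEquivOfSurjective f hf.surjective).symm.trans
    ((quotientAddEquivOfEq hker).trans (quotientKerEquivOfSurjective g hgs))
  have he : Continuous e := hf.continuous_iff.mpr <| by
    convert hg using 1
    ext x
    have hfx : (quotientKerEquivOfSurjective f hf.surjective).symm (f x) = (x : X ⧸ f.ker) :=
      (AddEquiv.symm_apply_eq _).mpr rfl
    simp only [e, Function.comp_apply, AddEquiv.trans_apply, hfx]
    rfl
  { e with
    continuous_toFun := he
    continuous_invFun := he.continuous_symm_of_equiv_compact_to_t2 }

instance isClosed_intLattice (n : ℕ) : IsClosed (intLattice n : Set (Fin n → ℝ)) := by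
  have : (intLattice n : Set (Fin n → ℝ)) = ⋂ i, (fun v => v i) ⁻¹' Set.range ((↑) : ℤ → ℝ) := by
    ext v
    simp [intLattice, eq_comm]
  rw [this]
  exact isClosed_iInter fun i => Real.isClosed_range_intCast.preimage (continuous_apply i)

section IntegerMatrix

variable {a b : ℕ}

lemma mulVec_mem_intLattice (M : Matrix (Fin a) (Fin b) ℤ) {x : Fin b → ℝ}
    (hx : x ∈ intLattice b) : M.map (Int.castRingHom ℝ) *ᵥ x ∈ intLattice a := by
  choose y hy using hx
  intro i
  refine ⟨∑ j, M i j * y j, ?_⟩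
  simp [mulVec, dotProduct, hy]

lemma map_inv_mul_map (M : GL (Fin a) ℤ) :
    (↑M⁻¹ : Matrix (Fin a) (Fin a) ℤ).map (Int.castRingHom ℝ) *
      (M : Matrix (Fin a) (Fin a) ℤ).map (Int.castRingHom ℝ) = 1 := by
  rw [← Matrix.map_mul]
  simp

lemma map_mul_map_inv (M : GL (Fin a) ℤ) :
    (M : Matrix (Fin a) (Fin a) ℤ).map (Int.castRingHom ℝ) *
      (↑M⁻¹ : Matrix (Fin a) (Fin a) ℤ).map (Int.castRingHom ℝ) = 1 := by
  simpa using map_inv_mul_map M⁻¹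

lemma mulVec_mem_intLattice_iff (M : GL (Fin a) ℤ) {x : Fin a → ℝ} :
    (M : Matrix (Fin a) (Fin a) ℤ).map (Int.castRingHom ℝ) *ᵥ x ∈ intLattice a ↔
      x ∈ intLattice a := by
  refine ⟨fun h => ?_, mulVec_mem_intLattice _⟩
  have := mulVec_mem_intLattice (↑M⁻¹ : Matrix (Fin a) (Fin a) ℤ) h
  rwa [mulVec_mulVec, map_inv_mul_map, one_mulVec] at this

end IntegerMatrix

section SmithForm

variable {p n r : ℕ}

lemma mem_preG_mul_mul (U : GL (Fin p) ℤ) (A : Matrix (Fin p) (Fin n) ℤ) (V : GL (Fin n) ℤ)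
    {z : Fin n → ℝ} :
    z ∈ preG p n ((U : Matrix (Fin p) (Fin p) ℤ) * A * (V : Matrix (Fin n) (Fin n) ℤ)) ↔
      (V : Matrix (Fin n) (Fin n) ℤ).map (Int.castRingHom ℝ) *ᵥ z ∈ preG p n A := by
  change ((U : Matrix (Fin p) (Fin p) ℤ) * A * (V : Matrix (Fin n) (Fin n) ℤ)).map
      (Int.castRingHom ℝ) *ᵥ z ∈ intLattice p ↔ A.map (Int.castRingHom ℝ) *ᵥ _ ∈ intLattice p
  rw [Matrix.map_mul (f := Int.castRingHom ℝ), Matrix.map_mul (f := Int.castRingHom ℝ),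
    ← mulVec_mulVec, ← mulVec_mulVec]
  exact mulVec_mem_intLattice_iff U

lemma mulVec_apply_of_diagonal {S : Matrix (Fin p) (Fin n) ℤ}
    (hdiag : ∀ (i : Fin p) (j : Fin n), (i : ℕ) ≠ (j : ℕ) → S i j = 0)
    (hrp : r ≤ p) (hrn : r ≤ n) {s : Fin r → ℤ}
    (hSs : ∀ k : Fin r, S ⟨k, lt_of_lt_of_le k.2 hrp⟩ ⟨k, lt_of_lt_of_le k.2 hrn⟩ = s k)
    (hzero : ∀ (i : Fin p) (j : Fin n), (i : ℕ) = (j : ℕ) → r ≤ (i : ℕ) → S i j = 0)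
    (z : Fin n → ℝ) (i : Fin p) :
    (S.map (Int.castRingHom ℝ) *ᵥ z) i =
      if h : (i : ℕ) < r then (s ⟨i, h⟩ : ℝ) * z (Fin.castLE hrn ⟨i, h⟩) else 0 := by
  rw [mulVec, dotProduct]
  split_ifs with h
  · rw [Finset.sum_eq_single (Fin.castLE hrn ⟨i, h⟩)]
    · simp [← hSs ⟨i, h⟩]
    · intro j _ hj
      simp [hdiag i j (fun hij => hj (Fin.ext hij.symm))]
    · simp
  · refine Finset.sum_eq_zero fun (j : Fin n) _ => ?_
    by_cases hij : (i : ℕ) = j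
    · simp [hzero i j hij (not_lt.mp h)]
    · simp [hdiag i j hij]

lemma mem_preG_iff_of_diagonal {S : Matrix (Fin p) (Fin n) ℤ}
    (hdiag : ∀ (i : Fin p) (j : Fin n), (i : ℕ) ≠ (j : ℕ) → S i j = 0)
    (hrp : r ≤ p) (hrn : r ≤ n) {s : Fin r → ℤ}
    (hSs : ∀ k : Fin r, S ⟨k, lt_of_lt_of_le k.2 hrp⟩ ⟨k, lt_of_lt_of_le k.2 hrn⟩ = s k)
    (hzero : ∀ (i : Fin p) (j : Fin n), (i : ℕ) = (j : ℕ) → r ≤ (i : ℕ) → S i j = 0)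
    {z : Fin n → ℝ} :
    z ∈ preG p n S ↔ ∀ k : Fin r, ∃ m : ℤ, (s k : ℝ) * z (Fin.castLE hrn k) = m := by
  change (∀ i, ∃ m : ℤ, (S.map (Int.castRingHom ℝ) *ᵥ z) i = m) ↔ _
  simp only [mulVec_apply_of_diagonal hdiag hrp hrn hSs hzero]
  constructor
  · intro h k
    simpa using h (Fin.castLE hrp k)
  · intro h i
    split_ifs
    · exact h _
    · exact ⟨0, by simp⟩

section SmithQuotientMap

variable {ι κ : Type*} (s : κ → ℤ)

def smithQuotientMap :
    ((ι → ℝ) × (κ → ℤ)) →+ ((ι → AddCircle (1 : ℝ)) × ((k : κ) → ZMod (s k).natAbs)) :=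
  (AddMonoidHom.compLeft (QuotientAddGroup.mk' _) ι).prodMap
    (AddMonoidHom.pi fun k => (Int.castAddHom (ZMod (s k).natAbs)).comp (Pi.evalAddMonoidHom _ k))

lemma isQuotientMap_smithQuotientMap : IsQuotientMap (smithQuotientMap (ι := ι) s) := by
  have hZMod : ∀ k, IsOpenQuotientMap ((↑) : ℤ → ZMod (s k).natAbs) := fun k =>
    ⟨ZMod.intCast_surjective, continuous_of_discreteTopology, fun _ _ => isOpen_discrete _⟩
  exact ((IsOpenQuotientMap.piMap fun _ => isOpenQuotientMap_mk).prodMap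
    (IsOpenQuotientMap.piMap hZMod)).isQuotientMap

@[simp]
lemma smithQuotientMap_apply (x : (ι → ℝ) × (κ → ℤ)) :
    smithQuotientMap s x = (fun j => (x.1 j : AddCircle (1 : ℝ)), fun k => (x.2 k : ZMod _)) :=
  rfl

lemma smithQuotientMap_eq_zero_iff {x : (ι → ℝ) × (κ → ℤ)} :
    smithQuotientMap s x = 0 ↔ (∀ j, ∃ c : ℤ, x.1 j = c) ∧ ∀ k, s k ∣ x.2 k := by
  rw [smithQuotientMap_apply, Prod.mk_eq_zero, funext_iff, funext_iff]
  simp only [Pi.zero_apply, AddCircle.coe_eq_zero_iff, zsmul_eq_mul, mul_one,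
    ZMod.intCast_zmod_eq_zero_iff_dvd, Int.natAbs_dvd]
  exact and_congr_left' (forall_congr' fun j => exists_congr fun c => eq_comm)

end SmithQuotientMap

lemma exists_intCast_eq_intCast_div_iff_dvd {K : Type*} [Field K] [CharZero K] {m d : ℤ}
    (hd : d ≠ 0) : (∃ c : ℤ, (c : K) = m / d) ↔ d ∣ m := by
  have hd' : (d : K) ≠ 0 := Int.cast_ne_zero.mpr hd
  constructor
  · rintro ⟨c, hc⟩
    refine ⟨c, Int.cast_injective (α := K) ?_⟩
    rw [Int.cast_mul, hc, mul_div_cancel₀ _ hd']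
  · rintro ⟨c, rfl⟩
    exact ⟨c, by rw [Int.cast_mul, mul_div_cancel_left₀ _ hd']⟩

section SmithParam

variable (s : Fin r → ℤ)

noncomputable def smithParam : ((Fin (n - r) → ℝ) × (Fin r → ℤ)) →+ (Fin n → ℝ) where
  toFun x i := if h : (i : ℕ) < r then (x.2 ⟨i, h⟩ : ℝ) / s ⟨i, h⟩ else x.1 ⟨i - r, by omega⟩
  map_zero' := by
    ext i
    split_ifs <;> simp
  map_add' x y := by
    ext i
    by_cases h : (i : ℕ) < r <;> simp [h, add_div]

variable {s}

lemma smithParam_apply_castLE (hrn : r ≤ n) (x : (Fin (n - r) → ℝ) × (Fin r → ℤ)) (k : Fin r) :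
    smithParam s x (Fin.castLE hrn k) = x.2 k / s k :=
  dif_pos k.2

lemma smithParam_apply_of_le (x : (Fin (n - r) → ℝ) × (Fin r → ℤ)) {i : Fin n}
    (hi : r ≤ (i : ℕ)) : smithParam s x i = x.1 ⟨i - r, by omega⟩ :=
  dif_neg (not_lt.mpr hi)

lemma continuous_smithParam : Continuous (smithParam s : _ → Fin n → ℝ) := by
  refine continuous_pi fun i => ?_
  by_cases h : (i : ℕ) < r
  · simp only [smithParam, AddMonoidHom.coe_mk, ZeroHom.coe_mk, dif_pos h]
    exact (continuous_of_discreteTopology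
      (f := fun m : Fin r → ℤ => (m ⟨i, h⟩ : ℝ) / s ⟨i, h⟩)).comp continuous_snd
  · simp only [smithParam, AddMonoidHom.coe_mk, ZeroHom.coe_mk, dif_neg h]
    exact (continuous_apply _).comp continuous_fst

lemma smithParam_apply_natAdd (x : (Fin (n - r) → ℝ) × (Fin r → ℤ)) (j : Fin (n - r))
    (h : r + (j : ℕ) < n) : smithParam s x ⟨r + j, h⟩ = x.1 j :=
  (smithParam_apply_of_le x (Nat.le_add_right r j)).trans (congrArg x.1 (Fin.ext (by simp)))

lemma smithParam_mem_intLattice_iff (hrn : r ≤ n) (hs : ∀ k, s k ≠ 0)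
    {x : (Fin (n - r) → ℝ) × (Fin r → ℤ)} :
    smithParam s x ∈ intLattice n ↔ (∀ j, ∃ c : ℤ, x.1 j = c) ∧ ∀ k, s k ∣ x.2 k := by
  simp only [← exists_intCast_eq_intCast_div_iff_dvd (K := ℝ) (hs _)]
  constructor
  · intro h
    refine ⟨fun j => ?_, fun k => ?_⟩
    · obtain ⟨c, hc⟩ := h ⟨r + j, by omega⟩
      exact ⟨c, by rwa [smithParam_apply_natAdd] at hc⟩
    · simpa only [smithParam_apply_castLE, eq_comm] using h (Fin.castLE hrn k)
  · rintro ⟨htail, hhead⟩ i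
    by_cases h : (i : ℕ) < r
    · obtain ⟨c, hc⟩ := hhead ⟨i, h⟩
      exact ⟨c, by rw [show i = Fin.castLE hrn ⟨i, h⟩ from rfl, smithParam_apply_castLE, hc]⟩
    · rw [smithParam_apply_of_le _ (not_lt.mp h)]
      exact htail _

lemma exists_smithParam_eq (hrn : r ≤ n) (hs : ∀ k, s k ≠ 0) {z : Fin n → ℝ}
    (hz : ∀ k : Fin r, ∃ m : ℤ, (s k : ℝ) * z (Fin.castLE hrn k) = m) :
    ∃ x, smithParam s x = z := by
  choose m hm using hz
  refine ⟨(fun j => z ⟨r + j, by omega⟩, m), funext fun i => ?_⟩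
  by_cases h : (i : ℕ) < r
  · rw [show i = Fin.castLE hrn ⟨i, h⟩ from rfl, smithParam_apply_castLE, ← hm,
      mul_div_cancel_left₀ _ (Int.cast_ne_zero.mpr (hs _))]
  · rw [smithParam_apply_of_le _ (not_lt.mp h)]
    exact congrArg z (Fin.ext (by simp only; omega))

end SmithParam

section TorusParam

variable (V : GL (Fin n) ℤ) (s : Fin r → ℤ)

noncomputable def torusParam : ((Fin (n - r) → ℝ) × (Fin r → ℤ)) →+ Torus n :=
  (QuotientAddGroup.mk' (intLattice n)).comp
    ((mulVecLin ((V : Matrix (Fin n) (Fin n) ℤ).map (Int.castRingHom ℝ))).toAddMonoidHom.comp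
      (smithParam s))

variable {V s}

lemma torusParam_apply (x : (Fin (n - r) → ℝ) × (Fin r → ℤ)) :
    torusParam V s x =
      ((V : Matrix (Fin n) (Fin n) ℤ).map (Int.castRingHom ℝ) *ᵥ smithParam s x : Torus n) :=
  rfl

lemma continuous_torusParam : Continuous (torusParam V s) :=
  continuous_quot_mk.comp (continuous_const.matrix_mulVec continuous_smithParam)

lemma torusParam_eq_zero_iff (hrn : r ≤ n) (hs : ∀ k, s k ≠ 0)
    {x : (Fin (n - r) → ℝ) × (Fin r → ℤ)} :
    torusParam V s x = 0 ↔ smithQuotientMap s x = 0 := by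
  rw [torusParam_apply, QuotientAddGroup.eq_zero_iff, mulVec_mem_intLattice_iff,
    smithParam_mem_intLattice_iff hrn hs, smithQuotientMap_eq_zero_iff]

lemma range_torusParam {A : Matrix (Fin p) (Fin n) ℤ} {U : GL (Fin p) ℤ}
    {S : Matrix (Fin p) (Fin n) ℤ}
    (hS : S = (U : Matrix (Fin p) (Fin p) ℤ) * A * (V : Matrix (Fin n) (Fin n) ℤ))
    (hdiag : ∀ (i : Fin p) (j : Fin n), (i : ℕ) ≠ (j : ℕ) → S i j = 0)
    (hrp : r ≤ p) (hrn : r ≤ n) (hs : ∀ k, s k ≠ 0)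
    (hSs : ∀ k : Fin r, S ⟨k, lt_of_lt_of_le k.2 hrp⟩ ⟨k, lt_of_lt_of_le k.2 hrn⟩ = s k)
    (hzero : ∀ (i : Fin p) (j : Fin n), (i : ℕ) = (j : ℕ) → r ≤ (i : ℕ) → S i j = 0) :
    (torusParam V s).range = G p n A := by
  have hpreG (z : Fin n → ℝ) :
      (V : Matrix (Fin n) (Fin n) ℤ).map (Int.castRingHom ℝ) *ᵥ z ∈ preG p n A ↔
        ∀ k : Fin r, ∃ m : ℤ, (s k : ℝ) * z (Fin.castLE hrn k) = m := by
    rw [← mem_preG_mul_mul U, ← hS, mem_preG_iff_of_diagonal hdiag hrp hrn hSs hzero]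
  ext y
  constructor
  · rintro ⟨x, rfl⟩
    refine ⟨_, (hpreG _).mpr fun k => ⟨x.2 k, ?_⟩, rfl⟩
    rw [smithParam_apply_castLE, mul_div_cancel₀ _ (Int.cast_ne_zero.mpr (hs k))]
  · rintro ⟨w, hw, rfl⟩
    have hw' : (V : Matrix (Fin n) (Fin n) ℤ).map (Int.castRingHom ℝ) *ᵥ
        ((↑V⁻¹ : Matrix (Fin n) (Fin n) ℤ).map (Int.castRingHom ℝ) *ᵥ w) = w := by
      rw [mulVec_mulVec, map_mul_map_inv, one_mulVec]
    obtain ⟨x, hx⟩ := exists_smithParam_eq hrn hs ((hpreG _).mp (hw'.symm ▸ hw))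
    exact ⟨x, by rw [torusParam_apply, hx, hw']; rfl⟩

end TorusParam

end SmithForm

theorem smith_normal_form_dual_group_general (p n r : ℕ) (A : Matrix (Fin p) (Fin n) ℤ)
    (U : Matrix.GeneralLinearGroup (Fin p) ℤ) (V : Matrix.GeneralLinearGroup (Fin n) ℤ)
    (S : Matrix (Fin p) (Fin n) ℤ)
    (hS : S = (U : Matrix (Fin p) (Fin p) ℤ) * A * (V : Matrix (Fin n) (Fin n) ℤ))
    (hdiag : ∀ (i : Fin p) (j : Fin n), (i : ℕ) ≠ (j : ℕ) → S i j = 0)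
    (hrp : r ≤ p) (hrn : r ≤ n)
    (s : Fin r → ℤ) (hs : ∀ k, s k ≠ 0)
    (hSs : ∀ k : Fin r, S ⟨k, lt_of_lt_of_le k.2 hrp⟩ ⟨k, lt_of_lt_of_le k.2 hrn⟩ = s k)
    (hzero : ∀ (i : Fin p) (j : Fin n), (i : ℕ) = (j : ℕ) → r ≤ (i : ℕ) → S i j = 0) :
    ∃ e : ↥(G p n A) ≃+
        ((Fin (n - r) → AddCircle (1 : ℝ)) × ((k : Fin r) → ZMod (s k).natAbs)),
      Continuous e ∧ Continuous e.symm := by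
  -- makes every `ZMod (s k).natAbs` finite, so that the target group is compact
  have : ∀ k, NeZero (s k).natAbs := fun k => ⟨Int.natAbs_ne_zero.mpr (hs k)⟩
  have hrange := range_torusParam (V := V) hS hdiag hrp hrn hs hSs hzero
  let g : _ →+ G p n A := (torusParam V s).codRestrict _ fun x => hrange ▸ ⟨x, rfl⟩
  have hg_surj : Function.Surjective g := by
    rintro ⟨y, hy⟩
    obtain ⟨x, rfl⟩ := hrange.ge hy
    exact ⟨x, rfl⟩
  have hker : (smithQuotientMap s).ker = g.ker := by
    ext x
    simp [g, torusParam_eq_zero_iff hrn hs]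
  let e := ContinuousAddEquiv.ofKerEq (smithQuotientMap s) g (isQuotientMap_smithQuotientMap s)
    (continuous_torusParam.subtype_mk _) hg_surj hker
  exact ⟨e.symm.toAddEquiv, e.symm.continuous, e.continuous⟩

/-- if S = U A V is the Smith normal form of the integer matrix A, with
U, V unimodular, S diagonal with nonzero diagonal entries s₁, …, s_r (and the remaining
diagonal entries zero), then the topological group { m ∈ ℝⁿ : A m ∈ ℤᵖ } / ℤⁿ is isomorphic,
as a topological group, to (ℝ/ℤ)^{n-r} × ℤ/s₁ℤ × ⋯ × ℤ/s_rℤ. -/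
theorem smith_normal_form_dual_group (p n r : ℕ) (A : Matrix (Fin p) (Fin n) ℤ)
    (U : Matrix.GeneralLinearGroup (Fin p) ℤ) (V : Matrix.GeneralLinearGroup (Fin n) ℤ)
    (S : Matrix (Fin p) (Fin n) ℤ)
    (hS : S = (U : Matrix (Fin p) (Fin p) ℤ) * A * (V : Matrix (Fin n) (Fin n) ℤ))
    (hdiag : ∀ (i : Fin p) (j : Fin n), (i : ℕ) ≠ (j : ℕ) → S i j = 0)
    (hrp : r ≤ p) (hrn : r ≤ n)
    (s : Fin r → ℤ) (hs : ∀ k, s k ≠ 0)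
    (hdvd : ∀ k l : Fin r, k ≤ l → s k ∣ s l)
    (hSs : ∀ k : Fin r, S ⟨k, lt_of_lt_of_le k.2 hrp⟩ ⟨k, lt_of_lt_of_le k.2 hrn⟩ = s k)
    (hzero : ∀ (i : Fin p) (j : Fin n), (i : ℕ) = (j : ℕ) → r ≤ (i : ℕ) → S i j = 0) :
    ∃ e : ↥(G p n A) ≃+
        ((Fin (n - r) → AddCircle (1 : ℝ)) × ((k : Fin r) → ZMod (s k).natAbs)),
      Continuous e ∧ Continuous e.symm :=
  smith_normal_form_dual_group_general p n r A U V S hS hdiag hrp hrn s hs hSs hzero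
end

section
/- Let D : ℚ⁹ → ℚ³ be the linear map given by the 3 × 9 matrix with rows (−1,−1,−1,−1,−1,−1,0,0,0), (1,1,1,0,0,0,−1,−1,−1), (0,0,0,1,1,1,1,1,1), and consider the two-term chain complex C₁ = ℚ³ ⊕ ℚ⁹ → C₀ = ℚ³ whose differential ∂ is zero on the summand ℚ³ and equals D on the summand ℚ⁹. Then H₀ = C₀ / im ∂ has dimension 1 over ℚ, and H₁ = ker ∂ has dimension 10 over ℚ; in particular the Euler characteristic dim H₀ − dim H₁ equals −9. -/
/-!
Every column of `D` sums to zero, and the columns `e₁ - e₀`, `e₂ - e₀` already span the plane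
`x₀ + x₁ + x₂ = 0`; so `im ∂` is that plane and `H₀ ≅ ℚ` via the coordinate sum. The Euler
characteristic of a two-term complex is `dim C₀ - dim C₁ = 3 - 12`, which then forces `dim H₁ = 10`.
-/

/-- The 3 × 9 differential matrix for the reflexive triangle conv{(2,−1),(−1,2),(−1,−1)}. -/
def D : Matrix (Fin 3) (Fin 9) ℚ :=
  !![-1, -1, -1, -1, -1, -1, 0, 0, 0;
      1,  1,  1,  0,  0,  0, -1, -1, -1;
      0,  0,  0,  1,  1,  1,  1,  1,  1]

/-- The differential ∂ : C₁ = ℚ³ ⊕ ℚ⁹ → C₀ = ℚ³, zero on the summand ℚ³ and given by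
the matrix D on the summand ℚ⁹. -/
def bnd : ((Fin 3 → ℚ) × (Fin 9 → ℚ)) →ₗ[ℚ] (Fin 3 → ℚ) :=
  D.mulVecLin ∘ₗ LinearMap.snd ℚ (Fin 3 → ℚ) (Fin 9 → ℚ)

open Module LinearMap Matrix

section

variable {K V W : Type*} [Field K] [AddCommGroup V] [Module K V] [AddCommGroup W] [Module K W]

theorem finrank_quotient_range_sub_finrank_ker [FiniteDimensional K V] [FiniteDimensional K W]
    (f : V →ₗ[K] W) :
    (finrank K (W ⧸ range f) : ℤ) - finrank K (ker f) = finrank K W - finrank K V := by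
  have hW := (range f).finrank_quotient_add_finrank
  have hV := f.finrank_range_add_finrank_ker
  omega

theorem finrank_quotient_ker_of_ne_zero {f : Dual K V} (hf : f ≠ 0) :
    finrank K (V ⧸ ker f) = 1 := by
  rw [(f.quotKerEquivOfSurjective (surjective_iff_ne_zero.mpr hf)).finrank_eq, finrank_self]

end

theorem Matrix.range_mulVecLin_le_ker_dotProduct {R m n : Type*} [CommSemiring R] [Fintype m]
    [Fintype n] [DecidableEq m] {A : Matrix m n R} {v : m → R} (hv : v ᵥ* A = 0) :
    range A.mulVecLin ≤ ker (dotProductEquiv R m v) := by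
  rintro _ ⟨w, rfl⟩
  simp [dotProduct_mulVec, hv]

theorem one_vecMul_D : 1 ᵥ* D = 0 := by
  ext j; fin_cases j <;> simp [D, vecMul, dotProduct, Fin.sum_univ_succ]

theorem range_mulVecLin_D : range D.mulVecLin = ker (dotProductEquiv ℚ (Fin 3) 1) := by
  refine le_antisymm (range_mulVecLin_le_ker_dotProduct one_vecMul_D) fun x hx => ?_
  have hx₀ : x 0 = -x 1 + -x 2 := by
    simp only [mem_ker, dotProductEquiv_apply_apply, one_dotProduct, Fin.sum_univ_three] at hx
    linarith
  -- columns 0 and 3 of `D` are `e₁ - e₀` and `e₂ - e₀`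
  refine ⟨![x 1, 0, 0, x 2, 0, 0, 0, 0, 0], ?_⟩
  ext i; fin_cases i <;> simp [D, mulVec, dotProduct, Fin.sum_univ_succ, hx₀]

/-- for the two-term chain complex C₁ = ℚ³ ⊕ ℚ⁹ → C₀ = ℚ³ with
differential ∂, the homology H₀ = C₀ / im ∂ has dimension 1 and H₁ = ker ∂ has
dimension 10; in particular the Euler characteristic dim H₀ − dim H₁ equals −9. -/
theorem homology_of_skeleton_chain_complex :
    Module.finrank ℚ ((Fin 3 → ℚ) ⧸ LinearMap.range bnd) = 1 ∧
    Module.finrank ℚ (LinearMap.ker bnd) = 10 ∧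
    (Module.finrank ℚ ((Fin 3 → ℚ) ⧸ LinearMap.range bnd) : ℤ) -
      (Module.finrank ℚ (LinearMap.ker bnd) : ℤ) = -9 := by
  have hH₀ : finrank ℚ ((Fin 3 → ℚ) ⧸ range bnd) = 1 := by
    rw [bnd, range_comp_of_range_eq_top _ Submodule.range_snd, range_mulVecLin_D]
    exact finrank_quotient_ker_of_ne_zero ((dotProductEquiv ℚ _).map_ne_zero_iff.mpr one_ne_zero)
  have hχ := finrank_quotient_range_sub_finrank_ker bnd
  simp only [finrank_fin_fun, finrank_prod] at hχ
  exact ⟨hH₀, by omega, by omega⟩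
end
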